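/- arXiv:1408.5374 — 3 statements merged into one kernel-verified Lean document; each statement's English description precedes it below -/
import Mathlib

section
/- Let U, V be Hilbert spaces, b : U × V → ℝ a bounded bilinear form, Θ : U → V the trial-to-test operator defined by ⟨Θφ, v⟩_V = b(φ, v) for all v ∈ V. Suppose u ∈ U solves b(u, v) = L(v) for all v ∈ V, where L ∈ V'. Let U_h ⊆ U be a finite-dimensional subspace and suppose u_h ∈ U_h satisfies b(u_h, Θw) = L(Θw) for all w ∈ U_h. Then ‖u − u_h‖_E = inf_{w ∈ U_h} ‖u − w‖_E, where ‖φ‖_E := sup_{v ≠ 0} b(φ, v)/‖v‖_V. -/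
open RealInnerProductSpace

/-- The DPG (Petrov–Galerkin with optimal test functions) solution is a best
approximation in the energy norm. -/
theorem stmt_1
    {U V : Type*} [NormedAddCommGroup U] [InnerProductSpace ℝ U] [CompleteSpace U]
    [NormedAddCommGroup V] [InnerProductSpace ℝ V] [CompleteSpace V]
    (b : U →ₗ[ℝ] V →ₗ[ℝ] ℝ) (C : ℝ)
    (hb : ∀ u v, |b u v| ≤ C * ‖u‖ * ‖v‖)
    (hnorm : ∀ φ : U, (∀ v, b φ v = 0) → φ = 0)
    (Θ : U → V) (hΘ : ∀ φ v, ⟪Θ φ, v⟫ = b φ v)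
    (Uh : Submodule ℝ U) [FiniteDimensional ℝ Uh]
    (L : V →L[ℝ] ℝ)
    (u : U) (hu : ∀ v, b u v = L v)
    (uh : U) (huh : uh ∈ Uh)
    (hgal : ∀ w : Uh, b uh (Θ w) = L (Θ w)) :
    (⨆ v : {v : V // v ≠ 0}, b (u - uh) v / ‖(v : V)‖)
      = ⨅ w : Uh, ⨆ v : {v : V // v ≠ 0}, b (u - w) v / ‖(v : V)‖ := by
  -- The energy norm equals ‖Θ φ‖
  have he : ∀ φ : U, (⨆ v : {v : V // v ≠ 0}, b φ v / ‖(v : V)‖) = ‖Θ φ‖ := by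
    intro φ
    have hub : ∀ v : {v : V // v ≠ 0}, b φ v / ‖(v : V)‖ ≤ ‖Θ φ‖ := by
      intro v
      rw [← hΘ]
      rw [div_le_iff₀ (norm_pos_iff.mpr v.2)]
      exact real_inner_le_norm _ _
    apply le_antisymm
    · exact Real.iSup_le hub (norm_nonneg _)
    · rcases eq_or_ne (Θ φ) 0 with h | h
      · have hz : ∀ v : {v : V // v ≠ 0}, b φ v / ‖(v : V)‖ = 0 := by
          intro v
          rw [← hΘ, h, inner_zero_left, zero_div]
        rw [h, norm_zero]
        cases isEmpty_or_nonempty {v : V // v ≠ 0} with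
        | inl hE => rw [Real.iSup_of_isEmpty]
        | inr hN =>
          rw [iSup_congr hz, ciSup_const]
      · have hbdd : BddAbove (Set.range fun v : {v : V // v ≠ 0} => b φ v / ‖(v : V)‖) :=
          ⟨‖Θ φ‖, by rintro _ ⟨v, rfl⟩; exact hub v⟩
        have := le_ciSup hbdd ⟨Θ φ, h⟩
        have hval : b φ (Θ φ) / ‖Θ φ‖ = ‖Θ φ‖ := by
          rw [← hΘ, real_inner_self_eq_norm_mul_norm,
            mul_div_assoc, div_self (norm_ne_zero_iff.mpr h), mul_one]
        simpa [hval] using this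
  -- Galerkin orthogonality
  have horth : ∀ w : Uh, ⟪Θ (u - uh), Θ ((w : U))⟫ = 0 := by
    intro w
    rw [hΘ, map_sub, LinearMap.sub_apply, hu, hgal w, sub_self]
  -- Θ is "additive" in the needed sense
  have hsplit : ∀ w : Uh, Θ (u - (w : U)) = Θ (u - uh) + Θ (uh - (w : U)) := by
    intro w
    apply ext_inner_right ℝ
    intro v
    rw [inner_add_left, hΘ, hΘ, hΘ, map_sub, map_sub, map_sub]
    simp only [LinearMap.sub_apply]
    ring
  -- Pythagoras: uh is the best approximation
  have hbest : ∀ w : Uh, ‖Θ (u - uh)‖ ≤ ‖Θ (u - (w : U))‖ := by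
    intro w
    have hx : uh - (w : U) = ((⟨uh, huh⟩ - w : Uh) : U) := rfl
    have ho : ⟪Θ (u - uh), Θ (uh - (w : U))⟫ = 0 := by
      rw [hx]; exact horth _
    have hpy := norm_add_sq_real (Θ (u - uh)) (Θ (uh - (w : U)))
    rw [ho] at hpy
    rw [hsplit w]
    nlinarith [norm_nonneg (Θ (u - uh) + Θ (uh - (w : U))), norm_nonneg (Θ (u - uh)),
      norm_nonneg (Θ (uh - (w : U))), sq_nonneg ‖Θ (uh - (w : U))‖]
  calc (⨆ v : {v : V // v ≠ 0}, b (u - uh) v / ‖(v : V)‖) = ‖Θ (u - uh)‖ := he _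
    _ = ⨅ w : Uh, ‖Θ (u - (w : U))‖ := by
        apply le_antisymm
        · exact le_ciInf hbest
        · have hbb : BddBelow (Set.range fun w : Uh => ‖Θ (u - (w : U))‖) :=
            ⟨0, by rintro _ ⟨w, rfl⟩; exact norm_nonneg _⟩
          exact ciInf_le hbb ⟨uh, huh⟩
    _ = ⨅ w : Uh, ⨆ v : {v : V // v ≠ 0}, b (u - w) v / ‖(v : V)‖ :=
        iInf_congr fun w => (he (u - w)).symm
end

section
/- Let U, V be Hilbert spaces and b : U × V → ℝ a bounded bilinear form such that both induced maps are injective: b(u, ·) = 0 implies u = 0 and b(·, v) = 0 implies v = 0. Suppose moreover that ‖u‖_U ≤ sup_{v ≠ 0} b(u, v)/‖v‖_V for all u ∈ U. Then for every u ∈ U, ‖u‖_U = sup_{v ≠ 0} b(u, v)/‖v‖_{opt}, where ‖v‖_{opt} := sup_{u ≠ 0} b(u, v)/‖u‖_U. -/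
open scoped InnerProductSpace

lemma aux_inner_sup {U : Type*} [NormedAddCommGroup U] [InnerProductSpace ℝ U] (x : U) :
    (⨆ w : {w : U // w ≠ 0}, ⟪x, (w : U)⟫_ℝ / ‖(w : U)‖) = ‖x‖ := by
  apply le_antisymm
  · refine Real.iSup_le (fun w => ?_) (norm_nonneg x)
    rw [div_le_iff₀ (norm_pos_iff.mpr w.2)]
    exact real_inner_le_norm x w
  · rcases eq_or_ne x 0 with rfl | hx
    · simp only [inner_zero_left, zero_div, norm_zero]
      exact Real.iSup_nonneg fun _ => le_rfl
    · have hbdd : BddAbove (Set.range fun w : {w : U // w ≠ 0} => ⟪x, (w : U)⟫_ℝ / ‖(w : U)‖) := by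
        refine ⟨‖x‖, ?_⟩
        rintro _ ⟨w, rfl⟩
        rw [div_le_iff₀ (norm_pos_iff.mpr w.2)]
        exact real_inner_le_norm x w
      refine le_ciSup_of_le hbdd ⟨x, hx⟩ ?_
      rw [real_inner_self_eq_norm_mul_norm, mul_div_assoc, div_self (ne_of_gt (norm_pos_iff.mpr hx)), mul_one]

set_option maxHeartbeats 1000000 in
/-- Iterated duality: the norm on `U` is recovered as the dual norm, via `b`,
of the optimal test norm on `V`. -/
theorem stmt_2
    {U V : Type*} [NormedAddCommGroup U] [InnerProductSpace ℝ U] [CompleteSpace U]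
    [NormedAddCommGroup V] [InnerProductSpace ℝ V] [CompleteSpace V]
    (b : U →ₗ[ℝ] V →ₗ[ℝ] ℝ) (C : ℝ)
    (hb : ∀ u v, |b u v| ≤ C * ‖u‖ * ‖v‖)
    (hinjU : ∀ u : U, (∀ v, b u v = 0) → u = 0)
    (hinjV : ∀ v : V, (∀ u, b u v = 0) → v = 0)
    (hinfsup : ∀ u : U, ‖u‖ ≤ ⨆ v : {v : V // v ≠ 0}, b u v / ‖(v : V)‖)
    (u : U) :
    ‖u‖ = ⨆ v : {v : V // v ≠ 0},
      b u v / (⨆ w : {w : U // w ≠ 0}, b w (v : V) / ‖(w : U)‖) := by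
  classical
  -- the continuous bilinear form
  set b' : U →L[ℝ] V →L[ℝ] ℝ :=
    LinearMap.mkContinuous₂ b C (fun x y => by simpa using hb x y) with hb'
  set B : V → U := fun v => (InnerProductSpace.toDual ℝ U).symm (b'.flip v) with hB
  have key : ∀ (v : V) (w : U), ⟪B v, w⟫_ℝ = b w v := by
    intro v w
    rw [hB]
    simp [InnerProductSpace.toDual_symm_apply, hb']
  -- rewrite the inner supremum
  have hN : ∀ v : V, (⨆ w : {w : U // w ≠ 0}, b (w : U) v / ‖(w : U)‖) = ‖B v‖ := by
    intro v
    rw [← aux_inner_sup (B v)]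
    exact iSup_congr fun w => by rw [key]
  simp_rw [hN]
  -- B v ≠ 0 for v ≠ 0
  have hBne : ∀ v : V, v ≠ 0 → B v ≠ 0 := by
    intro v hv hBv
    exact hv (hinjV v fun w => by rw [← key v w, hBv, inner_zero_left])
  -- upper bound on each term
  have hterm : ∀ v : {v : V // v ≠ 0}, b u (v : V) / ‖B (v : V)‖ ≤ ‖u‖ := by
    intro v
    rw [div_le_iff₀ (norm_pos_iff.mpr (hBne v v.2))]
    rw [← key (v : V) u]
    exact le_of_le_of_eq (real_inner_le_norm (B (v : V)) u) (mul_comm _ _)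
  have hbdd : BddAbove (Set.range fun v : {v : V // v ≠ 0} => b u (v : V) / ‖B (v : V)‖) := by
    refine ⟨‖u‖, ?_⟩
    rintro _ ⟨v, rfl⟩
    exact hterm v
  apply le_antisymm
  · -- lower bound : ‖u‖ ≤ sup
    rcases eq_or_ne u 0 with rfl | hu
    · simp only [norm_zero, map_zero, LinearMap.zero_apply, zero_div]
      exact Real.iSup_nonneg fun _ => le_rfl
    -- B is linear
    have hadd : ∀ v w : V, B (v + w) = B v + B w := by
      intro v w
      refine ext_inner_right ℝ fun z => ?_
      rw [key, inner_add_left, key, key, map_add]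
    have hsmul : ∀ (c : ℝ) (v : V), B (c • v) = c • B v := by
      intro c v
      refine ext_inner_right ℝ fun z => ?_
      rw [key, real_inner_smul_left, key, map_smul, smul_eq_mul]
    set Bl : V →ₗ[ℝ] U :=
      { toFun := B, map_add' := hadd, map_smul' := hsmul } with hBl
    set K : Submodule ℝ U := LinearMap.range Bl with hK
    have horth : Kᗮ = ⊥ := by
      rw [Submodule.eq_bot_iff]
      intro x hx
      refine hinjU x fun v => ?_
      have := (Submodule.mem_orthogonal K x).mp hx (B v) ⟨v, rfl⟩
      rwa [key] at this
    have hclo : K.topologicalClosure = ⊤ := by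
      rw [← Submodule.orthogonal_orthogonal_eq_closure, horth, Submodule.bot_orthogonal_eq_top]
    have humem : u ∈ closure (K : Set U) := by
      rw [← Submodule.topologicalClosure_coe, hclo]
      trivial
    refine le_of_forall_pos_le_add fun ε hε => ?_
    have hupos : (0 : ℝ) < ‖u‖ := norm_pos_iff.mpr hu
    set δ : ℝ := min (ε / 2) (‖u‖ / 2) with hδ
    have hδpos : 0 < δ := lt_min (by linarith) (by linarith)
    obtain ⟨y, hyK, hyd⟩ := Metric.mem_closure_iff.mp humem δ hδpos
    obtain ⟨v, rfl⟩ := hyK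
    have hdist : ‖u - Bl v‖ < δ := by rwa [dist_eq_norm] at hyd
    have hδ1 : δ ≤ ε / 2 := min_le_left _ _
    have hδ2 : δ ≤ ‖u‖ / 2 := min_le_right _ _
    have hBv : Bl v ≠ 0 := by
      intro h
      rw [h, sub_zero] at hdist
      linarith
    have hv0 : v ≠ 0 := by
      intro h
      exact hBv (by rw [h, map_zero])
    have hxpos : (0 : ℝ) < ‖Bl v‖ := norm_pos_iff.mpr hBv
    have hinner : ‖u‖ * ‖u‖ - δ * ‖u‖ ≤ ⟪Bl v, u⟫_ℝ := by
      have h1 : ⟪u - Bl v, u⟫_ℝ = ⟪u, u⟫_ℝ - ⟪Bl v, u⟫_ℝ := inner_sub_left _ _ _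
      have h2 : |⟪u - Bl v, u⟫_ℝ| ≤ ‖u - Bl v‖ * ‖u‖ := abs_real_inner_le_norm _ _
      have h3 : ⟪u, u⟫_ℝ = ‖u‖ * ‖u‖ := real_inner_self_eq_norm_mul_norm u
      have h4 : ‖u - Bl v‖ * ‖u‖ ≤ δ * ‖u‖ :=
        mul_le_mul_of_nonneg_right hdist.le (norm_nonneg u)
      have h5 := abs_le.mp h2
      nlinarith [h5.1, h5.2]
    have hxn : ‖Bl v‖ ≤ ‖u‖ + δ := by
      calc ‖Bl v‖ = ‖u - (u - Bl v)‖ := by rw [sub_sub_cancel]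
        _ ≤ ‖u‖ + ‖u - Bl v‖ := norm_sub_le _ _
        _ ≤ ‖u‖ + δ := by linarith
    have hkey : ‖u‖ - ε ≤ b u v / ‖B v‖ := by
      have hBB : B v = Bl v := rfl
      rw [hBB, le_div_iff₀ hxpos, ← key v u, hBB]
      nlinarith
    have hle : b u v / ‖B v‖ ≤ ⨆ v : {v : V // v ≠ 0}, b u (v : V) / ‖B (v : V)‖ :=
      le_ciSup hbdd (⟨v, hv0⟩ : {v : V // v ≠ 0})
    linarith
  · exact Real.iSup_le hterm (norm_nonneg u)
end

section
/- Let U₀, U₁ be Hilbert spaces, U = U₀ × U₁ with norm ‖(u₀, u₁)‖_{α,β}² := α²‖u₀‖² + β²‖u₁‖² for parameters α, β > 0, and let b be a bounded bilinear form on U × V for a Hilbert space V. If for some constants c₀, c₁ > 0 every (u₀, u₁) ∈ U satisfies c₀ α‖u₀‖ + c₁ β‖u₁‖ ≤ sup_{v≠0} b(u₀, u₁; v)/‖v‖_{opt,α,β}, where ‖v‖_{opt,α,β} := sup_{(u₀,u₁)≠0} b(u₀, u₁; v)/‖(u₀, u₁)‖_{α,β}, then in fact c₀ α‖u₀‖ +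 c₁ β‖u₁‖ ≤ √2 ‖(u₀, u₁)‖_{α,β}; conversely ‖(u₀,u₁)‖_{α,β} = sup_{v≠0} b(u₀,u₁;v)/‖v‖_{opt,α,β} whenever ‖·‖_{opt,α,β} is a norm and b has trivial left kernel and V is reflexive. -/
/-- The weighted product norm on `U₀ × U₁`. -/
noncomputable def wnorm {U₀ U₁ : Type*} [NormedAddCommGroup U₀] [NormedAddCommGroup U₁]
    (α β : ℝ) (u : U₀ × U₁) : ℝ :=
  Real.sqrt (α ^ 2 * ‖u.1‖ ^ 2 + β ^ 2 * ‖u.2‖ ^ 2)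

/-- The optimal test norm on `V` induced by `b` and the weighted norm. -/
noncomputable def optnorm {U₀ U₁ V : Type*}
    [NormedAddCommGroup U₀] [NormedSpace ℝ U₀] [NormedAddCommGroup U₁] [NormedSpace ℝ U₁]
    [NormedAddCommGroup V] [NormedSpace ℝ V]
    (b : (U₀ × U₁) →ₗ[ℝ] V →ₗ[ℝ] ℝ) (α β : ℝ) (v : V) : ℝ :=
  ⨆ u : {u : U₀ × U₁ // u ≠ 0}, b u v / wnorm α β (u : U₀ × U₁)

/-- The energy norm: dual, via `b`, of the optimal test norm. -/
noncomputable def energynorm {U₀ U₁ V : Type*}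
    [NormedAddCommGroup U₀] [NormedSpace ℝ U₀] [NormedAddCommGroup U₁] [NormedSpace ℝ U₁]
    [NormedAddCommGroup V] [NormedSpace ℝ V]
    (b : (U₀ × U₁) →ₗ[ℝ] V →ₗ[ℝ] ℝ) (α β : ℝ) (u : U₀ × U₁) : ℝ :=
  ⨆ v : {v : V // v ≠ 0}, b u (v : V) / optnorm b α β (v : V)

/-!
The map `T u = (α u₀, β u₁)` is an isometry from `(U₀ × U₁, wnorm α β)` onto the Hilbert space
`WithLp 2 (U₀ × U₁)`. There, by the Riesz representation theorem, `b(·, v)` becomes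
`⟪W v, ·⟫` for a linear map `W`, so the optimal test norm of `v` is `‖W v‖` and the energy
norm of `u` is `⨆ v ≠ 0, ⟪W v, T u⟫ / ‖W v‖`. Cauchy–Schwarz bounds this by `‖T u‖ = wnorm α β u`
(which already gives the `√2` estimate), and a trivial left kernel of `b` means
`(range W)ᗮ = ⊥`, i.e. `W` has dense range, which turns the bound into an equality.
-/

open RealInnerProductSpace

section InnerSup

variable {E V : Type*} [NormedAddCommGroup E] [InnerProductSpace ℝ E]
  [AddCommGroup V] [Module ℝ V]

lemma inner_div_norm_le_norm (y x : E) : ⟪y, x⟫ / ‖y‖ ≤ ‖x‖ := by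
  rcases eq_or_ne y 0 with rfl | hy
  · simp
  · rw [div_le_iff₀ (norm_pos_iff.mpr hy), mul_comm]
    exact real_inner_le_norm y x

lemma iSup_inner_div_norm_le_norm (W : V →ₗ[ℝ] E) (x : E) :
    (⨆ v : {v : V // v ≠ 0}, ⟪W v, x⟫ / ‖W v‖) ≤ ‖x‖ :=
  Real.iSup_le (fun _ => inner_div_norm_le_norm _ x) (norm_nonneg x)

lemma iSup_inner_div_norm_eq_norm (W : V →ₗ[ℝ] E) (hW : DenseRange W) (x : E) :
    (⨆ v : {v : V // v ≠ 0}, ⟪W v, x⟫ / ‖W v‖) = ‖x‖ := by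
  refine le_antisymm (iSup_inner_div_norm_le_norm W x) ?_
  set s := ⨆ v : {v : V // v ≠ 0}, ⟪W v, x⟫ / ‖W v‖
  rcases eq_or_ne x 0 with rfl | hx
  · simpa using Real.iSup_nonneg fun v : {v : V // v ≠ 0} => by simp
  have hbdd : BddAbove (Set.range fun v : {v : V // v ≠ 0} => ⟪W v, x⟫ / ‖W v‖) :=
    ⟨‖x‖, by rintro _ ⟨v, rfl⟩; exact inner_div_norm_le_norm _ x⟩
  -- `⟪y, x⟫ ≤ s * ‖y‖` is a closed condition on `y`, true on the dense range of `W`.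
  have hle : ⟪x, x⟫ ≤ s * ‖x‖ := by
    refine hW.induction_on (p := fun y => ⟪y, x⟫ ≤ s * ‖y‖) x
      (isClosed_le (by fun_prop) (by fun_prop)) fun v => ?_
    rcases eq_or_ne v 0 with rfl | hv
    · simp
    rcases eq_or_ne (W v) 0 with hWv | hWv
    · simp [hWv]
    rw [← div_le_iff₀ (norm_pos_iff.mpr hWv)]
    exact le_ciSup hbdd ⟨v, hv⟩
  rw [real_inner_self_eq_norm_mul_norm] at hle
  exact le_of_mul_le_mul_right hle (norm_pos_iff.mpr hx)

end InnerSup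

section Weighted

variable {U₀ U₁ : Type*} [NormedAddCommGroup U₀] [NormedSpace ℝ U₀]
  [NormedAddCommGroup U₁] [NormedSpace ℝ U₁] {α β : ℝ}

noncomputable def weightEquiv (hα : α ≠ 0) (hβ : β ≠ 0) :
    (U₀ × U₁) ≃L[ℝ] WithLp 2 (U₀ × U₁) :=
  ((ContinuousLinearEquiv.smulLeft (Units.mk0 α hα)).prodCongr
    (ContinuousLinearEquiv.smulLeft (Units.mk0 β hβ))).trans
    (WithLp.prodContinuousLinearEquiv 2 ℝ U₀ U₁).symm

lemma wnorm_eq_norm_weightEquiv (hα : α ≠ 0) (hβ : β ≠ 0) (u : U₀ × U₁) :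
    wnorm α β u = ‖weightEquiv hα hβ u‖ := by
  simp [wnorm, WithLp.prod_norm_eq_of_L2, weightEquiv, norm_smul, mul_pow]

end Weighted

section Riesz

variable {U₀ U₁ V : Type*}
  [NormedAddCommGroup U₀] [InnerProductSpace ℝ U₀] [CompleteSpace U₀]
  [NormedAddCommGroup U₁] [InnerProductSpace ℝ U₁] [CompleteSpace U₁]
  [NormedAddCommGroup V] [NormedSpace ℝ V]
  (b : (U₀ × U₁) →ₗ[ℝ] V →ₗ[ℝ] ℝ) {M : ℝ} (hb : ∀ u v, |b u v| ≤ M * ‖u‖ * ‖v‖)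
  {α β : ℝ} (hα : α ≠ 0) (hβ : β ≠ 0)

noncomputable def rieszRepresenter : V →ₗ[ℝ] WithLp 2 (U₀ × U₁) where
  toFun v := (InnerProductSpace.toDual ℝ _).symm
    (((b.mkContinuous₂ M hb).flip v).comp (weightEquiv hα hβ).symm.toContinuousLinearMap)
  map_add' _ _ := by simp
  map_smul' _ _ := by simp

lemma inner_rieszRepresenter (v : V) (x : WithLp 2 (U₀ × U₁)) :
    ⟪rieszRepresenter b hb hα hβ v, x⟫ = b ((weightEquiv hα hβ).symm x) v := by
  simp [rieszRepresenter, InnerProductSpace.toDual_symm_apply]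

lemma optnorm_eq_norm_rieszRepresenter (v : V) :
    optnorm b α β v = ‖rieszRepresenter b hb hα hβ v‖ := by
  let e : {u : U₀ × U₁ // u ≠ 0} ≃ {x : WithLp 2 (U₀ × U₁) // x ≠ 0} :=
    (weightEquiv hα hβ).toEquiv.subtypeEquiv fun _ => (weightEquiv hα hβ).map_ne_zero_iff.symm
  rw [← iSup_inner_div_norm_eq_norm LinearMap.id denseRange_id, optnorm,
    ← e.iSup_comp]
  refine iSup_congr fun ⟨u, _⟩ => ?_
  change _ = ⟪weightEquiv hα hβ u, rieszRepresenter b hb hα hβ v⟫ / ‖weightEquiv hα hβ u‖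
  rw [real_inner_comm, inner_rieszRepresenter, ContinuousLinearEquiv.symm_apply_apply,
    wnorm_eq_norm_weightEquiv hα hβ]

lemma energynorm_eq_iSup_inner_rieszRepresenter (u : U₀ × U₁) :
    energynorm b α β u = ⨆ v : {v : V // v ≠ 0},
      ⟪rieszRepresenter b hb hα hβ v, weightEquiv hα hβ u⟫ / ‖rieszRepresenter b hb hα hβ v‖ := by
  simp only [energynorm, optnorm_eq_norm_rieszRepresenter b hb hα hβ, inner_rieszRepresenter,
    ContinuousLinearEquiv.symm_apply_apply]

lemma denseRange_rieszRepresenter (hker : ∀ u : U₀ × U₁, (∀ v, b u v = 0) → u = 0) :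
    DenseRange (rieszRepresenter b hb hα hβ) := by
  rw [DenseRange, ← LinearMap.coe_range, Submodule.dense_iff_topologicalClosure_eq_top,
    Submodule.topologicalClosure_eq_top_iff, Submodule.eq_bot_iff]
  intro x hx
  have hb0 : ∀ v, b ((weightEquiv hα hβ).symm x) v = 0 := fun v => by
    rw [← inner_rieszRepresenter b hb hα hβ]
    exact (Submodule.mem_orthogonal _ x).mp hx _ (LinearMap.mem_range_self _ v)
  simpa using hker _ hb0

end Riesz

section EnergyNorm

variable {U₀ U₁ V : Type*}
  [NormedAddCommGroup U₀] [InnerProductSpace ℝ U₀] [CompleteSpace U₀]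
  [NormedAddCommGroup U₁] [InnerProductSpace ℝ U₁] [CompleteSpace U₁]
  [NormedAddCommGroup V] [NormedSpace ℝ V]
  (b : (U₀ × U₁) →ₗ[ℝ] V →ₗ[ℝ] ℝ) {M : ℝ} {α β : ℝ}

lemma energynorm_le_wnorm (hb : ∀ u v, |b u v| ≤ M * ‖u‖ * ‖v‖) (hα : α ≠ 0) (hβ : β ≠ 0)
    (u : U₀ × U₁) : energynorm b α β u ≤ wnorm α β u := by
  rw [energynorm_eq_iSup_inner_rieszRepresenter b hb hα hβ, wnorm_eq_norm_weightEquiv hα hβ]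
  exact iSup_inner_div_norm_le_norm _ _

lemma energynorm_eq_wnorm (hb : ∀ u v, |b u v| ≤ M * ‖u‖ * ‖v‖) (hα : α ≠ 0) (hβ : β ≠ 0)
    (hker : ∀ u : U₀ × U₁, (∀ v, b u v = 0) → u = 0) (u : U₀ × U₁) :
    energynorm b α β u = wnorm α β u := by
  rw [energynorm_eq_iSup_inner_rieszRepresenter b hb hα hβ, wnorm_eq_norm_weightEquiv hα hβ,
    iSup_inner_div_norm_eq_norm _ (denseRange_rieszRepresenter b hb hα hβ hker)]

end EnergyNorm

theorem stmt_14_general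
    {U₀ U₁ V : Type*}
    [NormedAddCommGroup U₀] [InnerProductSpace ℝ U₀] [CompleteSpace U₀]
    [NormedAddCommGroup U₁] [InnerProductSpace ℝ U₁] [CompleteSpace U₁]
    [NormedAddCommGroup V] [InnerProductSpace ℝ V]
    (b : (U₀ × U₁) →ₗ[ℝ] V →ₗ[ℝ] ℝ) (M : ℝ)
    (hb : ∀ u v, |b u v| ≤ M * ‖u‖ * ‖v‖)
    (α β : ℝ) (hα : 0 < α) (hβ : 0 < β)
    (c₀ c₁ : ℝ) :
    ((∀ u : U₀ × U₁, c₀ * α * ‖u.1‖ + c₁ * β * ‖u.2‖ ≤ energynorm b α β u) →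
      ∀ u : U₀ × U₁, c₀ * α * ‖u.1‖ + c₁ * β * ‖u.2‖ ≤ Real.sqrt 2 * wnorm α β u) ∧
    ((∀ v : V, optnorm b α β v = 0 → v = 0) →
      (∀ u : U₀ × U₁, (∀ v, b u v = 0) → u = 0) →
      ∀ u : U₀ × U₁, wnorm α β u = energynorm b α β u) := by
  refine ⟨fun hlower u => ?_, fun _ hker u => ?_⟩
  · calc c₀ * α * ‖u.1‖ + c₁ * β * ‖u.2‖ ≤ energynorm b α β u := hlower u
      _ ≤ wnorm α β u := energynorm_le_wnorm b hb hα.ne' hβ.ne' u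
      _ ≤ Real.sqrt 2 * wnorm α β u :=
        le_mul_of_one_le_left (Real.sqrt_nonneg _) Real.one_lt_sqrt_two.le
  · exact (energynorm_eq_wnorm b hb hα.ne' hβ.ne' hker u).symm

/-- Abstract weighted-norm duality identity underpinning Lemma 13 and (43). -/
theorem stmt_14
    {U₀ U₁ V : Type*}
    [NormedAddCommGroup U₀] [InnerProductSpace ℝ U₀] [CompleteSpace U₀]
    [NormedAddCommGroup U₁] [InnerProductSpace ℝ U₁] [CompleteSpace U₁]
    [NormedAddCommGroup V] [InnerProductSpace ℝ V] [CompleteSpace V]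
    (b : (U₀ × U₁) →ₗ[ℝ] V →ₗ[ℝ] ℝ) (M : ℝ)
    (hb : ∀ u v, |b u v| ≤ M * ‖u‖ * ‖v‖)
    (α β : ℝ) (hα : 0 < α) (hβ : 0 < β)
    (c₀ c₁ : ℝ) (hc₀ : 0 < c₀) (hc₁ : 0 < c₁) :
    ((∀ u : U₀ × U₁, c₀ * α * ‖u.1‖ + c₁ * β * ‖u.2‖ ≤ energynorm b α β u) →
      ∀ u : U₀ × U₁, c₀ * α * ‖u.1‖ + c₁ * β * ‖u.2‖ ≤ Real.sqrt 2 * wnorm α β u) ∧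
    ((∀ v : V, optnorm b α β v = 0 → v = 0) →
      (∀ u : U₀ × U₁, (∀ v, b u v = 0) → u = 0) →
      ∀ u : U₀ × U₁, wnorm α β u = energynorm b α β u) :=
  stmt_14_general b M hb α β hα hβ c₀ c₁
end
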